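/- Let s ≥ 1 and let f be a contiguous subword of the word (yyxx)^s in the free monoid on {x,y}. If a and b are words in the free monoid on {x,y} such that the images of the words a·b and f in the algebra F are equal, then a is a prefix (left subword) of f. -/

import Mathlib

open FreeAlgebra

noncomputable section

/-- The defining relations `x³ = yxy`, `y³ = xyx` of the algebra `F`
(with `x = ι k 0`, `y = ι k 1`). -/
inductive FRel (k : Type*) [CommRing k] :
    FreeAlgebra k (Fin 2) → FreeAlgebra k (Fin 2) → Prop
  | rel1 : FRel k (ι k 0 * ι k 0 * ι k 0) (ι k 1 * ι k 0 * ι k 1)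
  | rel2 : FRel k (ι k 1 * ι k 1 * ι k 1) (ι k 0 * ι k 1 * ι k 0)

/-- The algebra `F = k⟨x,y⟩/(x³ − yxy, y³ − xyx)`. -/
abbrev FAlg (k : Type*) [CommRing k] : Type _ := RingQuot (FRel k)

/-- The generator `x` of `F`. -/
def FAlg.x (k : Type*) [CommRing k] : FAlg k :=
  RingQuot.mkAlgHom k (FRel k) (ι k 0)

/-- The generator `y` of `F`. -/
def FAlg.y (k : Type*) [CommRing k] : FAlg k :=
  RingQuot.mkAlgHom k (FRel k) (ι k 1)

/-- The image in `F` of a word in the free monoid on `{x, y}` (`x = 0`, `y = 1`). -/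
def FAlg.wordVal (k : Type*) [CommRing k] : FreeMonoid (Fin 2) →* FAlg k :=
  FreeMonoid.lift fun i => RingQuot.mkAlgHom k (FRel k) (ι k i)

/-!
The relations of `F` equate monomials, so `F` maps to the monoid algebra of the monoid
presented by the same relations, and words with equal images in `F` are congruent modulo
those relations. No side of a relation (`xxx`, `yxy`, `yyy`, `xyx`) occurs in `(yyxx)^s`,
hence in `f`, so no relation ever applies to `f`: its congruence class is `{f}`, which
forces `a * b = f` as words.
-/

open FreeMonoid

inductive FWordRel : FreeMonoid (Fin 2) → FreeMonoid (Fin 2) → Prop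
  | rel1 : FWordRel (of 0 * of 0 * of 0) (of 1 * of 0 * of 1)
  | rel2 : FWordRel (of 1 * of 1 * of 1) (of 0 * of 1 * of 0)

namespace FreeMonoid

variable {α : Type*} (r : FreeMonoid α → FreeMonoid α → Prop)

def Avoids (w : FreeMonoid α) : Prop :=
  ∀ u v, r u v → ¬ u.toList <:+: w.toList ∧ ¬ v.toList <:+: w.toList

variable {r}

theorem Avoids.of_isInfix {w w' : FreeMonoid α} (hw' : Avoids r w')
    (h : w.toList <:+: w'.toList) : Avoids r w := fun u v huv =>
  ⟨fun hu => (hw' u v huv).1 (hu.trans h), fun hv => (hw' u v huv).2 (hv.trans h)⟩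

theorem Avoids.eq_of_conGen_rel {u v : FreeMonoid α} (h : ConGen.Rel r u v) :
    Avoids r u ∨ Avoids r v → u = v := by
  induction h with
  | of u v huv =>
    rintro (hu | hv)
    · exact absurd List.infix_rfl (hu u v huv).1
    · exact absurd List.infix_rfl (hv u v huv).2
  | refl => exact fun _ => rfl
  | symm _ ih => exact fun h => (ih h.symm).symm
  | trans _ _ ih₁ ih₂ =>
    rintro (hu | hw)
    · obtain rfl := ih₁ (.inl hu); exact ih₂ (.inl hu)
    · obtain rfl := ih₂ (.inr hw); exact ih₁ (.inr hw)
  | mul _ _ ih₁ ih₂ =>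
    have left {w₁ w₂ : FreeMonoid α} (h : Avoids r (w₁ * w₂)) : Avoids r w₁ :=
      h.of_isInfix List.infix_append_left
    have right {w₁ w₂ : FreeMonoid α} (h : Avoids r (w₁ * w₂)) : Avoids r w₂ :=
      h.of_isInfix List.infix_append_right
    rintro (h | h)
    · rw [ih₁ (.inl (left h)), ih₂ (.inl (right h))]
    · rw [ih₁ (.inr (left h)), ih₂ (.inr (right h))]

end FreeMonoid

theorem yyxx_pow_toList_succ (s : ℕ) :
    ((of (1 : Fin 2) * of 1 * of 0 * of 0) ^ (s + 1)).toList
      = 1 :: 1 :: 0 :: 0 :: ((of (1 : Fin 2) * of 1 * of 0 * of 0) ^ s).toList := by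
  rw [pow_succ', toList_mul]; rfl

theorem yyxx_pow_avoids (s : ℕ) :
    Avoids FWordRel ((of (1 : Fin 2) * of 1 * of 0 * of 0) ^ s) := by
  rintro _ _ ⟨⟩ <;> simp only [toList_mul, toList_of] <;> induction s with
  | zero => simp
  | succ n ih =>
    rw [yyxx_pow_toList_succ]
    cases n with
    | zero => simp [List.infix_cons_iff, List.prefix_cons_iff]
    | succ n =>
      rw [yyxx_pow_toList_succ] at ih ⊢
      simp_all [List.infix_cons_iff, List.prefix_cons_iff]

namespace FAlg

variable (k : Type*) [CommRing k]

def toMonoidAlgebra : FAlg k →ₐ[k] MonoidAlgebra k (conGen FWordRel).Quotient :=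
  RingQuot.liftAlgHom k ⟨FreeAlgebra.lift k fun i =>
      MonoidAlgebra.of k _ ((conGen FWordRel).mk' (of i)), by
    have hrel {u v} (h : FWordRel u v) : MonoidAlgebra.of k _ ((conGen FWordRel).mk' u)
        = MonoidAlgebra.of k _ ((conGen FWordRel).mk' v) :=
      congrArg _ ((conGen FWordRel).eq.mpr (ConGen.Rel.of _ _ h))
    rintro _ _ ⟨⟩
    · simpa [lift_ι_apply] using hrel .rel1
    · simpa [lift_ι_apply] using hrel .rel2⟩

theorem toMonoidAlgebra_wordVal (w : FreeMonoid (Fin 2)) :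
    toMonoidAlgebra k (wordVal k w) = MonoidAlgebra.of k _ ((conGen FWordRel).mk' w) := by
  have : (MonoidHomClass.toMonoidHom (toMonoidAlgebra k)).comp (wordVal k)
      = (MonoidAlgebra.of k _).comp (conGen FWordRel).mk' :=
    FreeMonoid.hom_eq fun i => by simp [wordVal, toMonoidAlgebra, lift_ι_apply]
  exact DFunLike.congr_fun this w

theorem conGen_rel_of_wordVal_eq [Nontrivial k] {u v : FreeMonoid (Fin 2)}
    (h : wordVal k u = wordVal k v) : ConGen.Rel FWordRel u v :=
  (conGen FWordRel).eq.mp <| MonoidAlgebra.of_injective (R := k)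
    (a₁ := (conGen FWordRel).mk' u) (a₂ := (conGen FWordRel).mk' v) <| by
    simpa only [toMonoidAlgebra_wordVal] using congrArg (toMonoidAlgebra k) h

end FAlg

theorem FAlg_left_subword (k : Type*) [Field k]
    (s : ℕ) (f a b : FreeMonoid (Fin 2))
    (hf : f.toList <:+:
      ((FreeMonoid.of (1 : Fin 2) * FreeMonoid.of 1 * FreeMonoid.of 0 * FreeMonoid.of 0)
          ^ s).toList)
    (hab : FAlg.wordVal k (a * b) = FAlg.wordVal k f) :
    a.toList <+: f.toList := by
  have hf_avoids : Avoids FWordRel f := (yyxx_pow_avoids s).of_isInfix hf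
  have hab_eq : a * b = f :=
    Avoids.eq_of_conGen_rel (FAlg.conGen_rel_of_wordVal_eq k hab) (.inr hf_avoids)
  exact ⟨b.toList, by rw [← hab_eq, toList_mul]⟩

end
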